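/- arXiv:2004.11710 — 2 statements merged into one kernel-verified Lean document; each statement's English description precedes it below -/
import Mathlib

section
/- Let X₁ be a real N×m matrix and X₂ a real N×q matrix with X₂ᵀX₂ invertible, let P = X₂(X₂ᵀX₂)⁻¹X₂ᵀ, y ∈ ℝ^N and λ ≥ 0. Define F(β₁, β₂) = ‖y − X₁β₁ − X₂β₂‖₂² + λ‖β₁‖₁ and G(β₁) = ‖(I − P)y − (I − P)X₁β₁‖₂² + λ‖β₁‖₁. Then a pair (β̂₁, β̂₂) ∈ ℝ^m × ℝ^q is a global minimizer of F if and only if β̂₁ is a global minimizer of G and β̂₂ = (X₂ᵀX₂)⁻¹X₂ᵀ(y − X₁β̂₁). -/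
open Matrix Finset

/-- Core equivalence in Proposition 2: `(bhat₁, bhat₂)` globally minimizes
`F(β₁, β₂) = ‖y − X₁β₁ − X₂β₂‖₂² + λ‖β₁‖₁` iff `bhat₁` globally minimizes
`G(β₁) = ‖(I−P)y − (I−P)X₁β₁‖₂² + λ‖β₁‖₁` and `bhat₂ = (X₂ᵀX₂)⁻¹X₂ᵀ(y − X₁bhat₁)`. -/
theorem stmt_8 {N m q : ℕ} (X₁ : Matrix (Fin N) (Fin m) ℝ) (X₂ : Matrix (Fin N) (Fin q) ℝ)
    (hX₂ : IsUnit (X₂ᵀ * X₂).det) (y : Fin N → ℝ) (lam : ℝ) (hlam : 0 ≤ lam)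
    (bhat₁ : Fin m → ℝ) (bhat₂ : Fin q → ℝ) :
    (∀ (β₁ : Fin m → ℝ) (β₂ : Fin q → ℝ),
        (∑ i, (y i - X₁.mulVec bhat₁ i - X₂.mulVec bhat₂ i) ^ 2) + lam * ∑ j, |bhat₁ j|
          ≤ (∑ i, (y i - X₁.mulVec β₁ i - X₂.mulVec β₂ i) ^ 2) + lam * ∑ j, |β₁ j|)
    ↔ ((∀ β₁ : Fin m → ℝ,
          (∑ i, (((1 : Matrix (Fin N) (Fin N) ℝ) - X₂ * (X₂ᵀ * X₂)⁻¹ * X₂ᵀ).mulVec y i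
              - (((1 : Matrix (Fin N) (Fin N) ℝ) - X₂ * (X₂ᵀ * X₂)⁻¹ * X₂ᵀ) * X₁).mulVec bhat₁ i) ^ 2)
            + lam * ∑ j, |bhat₁ j|
          ≤ (∑ i, (((1 : Matrix (Fin N) (Fin N) ℝ) - X₂ * (X₂ᵀ * X₂)⁻¹ * X₂ᵀ).mulVec y i
              - (((1 : Matrix (Fin N) (Fin N) ℝ) - X₂ * (X₂ᵀ * X₂)⁻¹ * X₂ᵀ) * X₁).mulVec β₁ i) ^ 2)
            + lam * ∑ j, |β₁ j|)
        ∧ bhat₂ = (X₂ᵀ * X₂)⁻¹.mulVec (X₂ᵀ.mulVec (y - X₁.mulVec bhat₁))) := by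
  set A : Matrix (Fin q) (Fin q) ℝ := X₂ᵀ * X₂ with hA
  have hAinv : A * A⁻¹ = 1 := Matrix.mul_nonsing_inv A hX₂
  have hinvA : A⁻¹ * A = 1 := Matrix.nonsing_inv_mul A hX₂
  set P : Matrix (Fin N) (Fin N) ℝ := X₂ * A⁻¹ * X₂ᵀ with hP
  set Q : Matrix (Fin N) (Fin N) ℝ := 1 - P with hQ
  have hPX₂ : P * X₂ = X₂ := by
    rw [hP, Matrix.mul_assoc, Matrix.mul_assoc, ← hA, hinvA, Matrix.mul_one]
  have hX₂TP : X₂ᵀ * P = X₂ᵀ := by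
    rw [hP, ← Matrix.mul_assoc, ← Matrix.mul_assoc, ← hA, hAinv, Matrix.one_mul]
  have hPP : P * P = P := by
    calc P * P = (P * X₂) * A⁻¹ * X₂ᵀ := by rw [hP]; simp [Matrix.mul_assoc]
    _ = P := by rw [hPX₂, ← hP]
  have hAT : Aᵀ = A := by rw [hA, Matrix.transpose_mul, Matrix.transpose_transpose]
  have hMT : (A⁻¹)ᵀ = A⁻¹ := by rw [Matrix.transpose_nonsing_inv, hAT]
  have hPT : Pᵀ = P := by
    rw [hP, Matrix.transpose_mul, Matrix.transpose_mul, Matrix.transpose_transpose, hMT,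
      Matrix.mul_assoc]
  have hQX₂ : Q * X₂ = 0 := by rw [hQ, Matrix.sub_mul, Matrix.one_mul, hPX₂, sub_self]
  have hQP : Q * P = 0 := by rw [hQ, Matrix.sub_mul, Matrix.one_mul, hPP, sub_self]
  have hQT : Qᵀ = Q := by rw [hQ, Matrix.transpose_sub, Matrix.transpose_one, hPT]
  -- orthogonality
  have ortho : ∀ (z v : Fin N → ℝ) (b : Fin q → ℝ),
      ∑ i, (Q.mulVec z i) * ((P.mulVec v - X₂.mulVec b) i) = 0 := by
    intro z v b
    have h1 : Q.mulVec z = Matrix.vecMul z Qᵀ := by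
      rw [← Matrix.mulVec_transpose, Matrix.transpose_transpose]
    have h2 : Qᵀ.mulVec (P.mulVec v - X₂.mulVec b) = 0 := by
      rw [hQT, Matrix.mulVec_sub, Matrix.mulVec_mulVec, Matrix.mulVec_mulVec, hQP, hQX₂,
        Matrix.zero_mulVec, Matrix.zero_mulVec, sub_self]
    calc ∑ i, (Q.mulVec z i) * ((P.mulVec v - X₂.mulVec b) i)
        = Matrix.vecMul z Qᵀ ⬝ᵥ (P.mulVec v - X₂.mulVec b) := by rw [← h1]; rfl
      _ = z ⬝ᵥ Qᵀ.mulVec (P.mulVec v - X₂.mulVec b) := (Matrix.dotProduct_mulVec _ _ _).symm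
      _ = 0 := by rw [h2, dotProduct_zero]
  -- Pythagoras
  have pyth : ∀ u w : Fin N → ℝ, (∑ i, u i * w i) = 0 →
      ∑ i, (u i + w i) ^ 2 = (∑ i, (u i) ^ 2) + ∑ i, (w i) ^ 2 := by
    intro u w h
    have e : ∀ i ∈ Finset.univ (α := Fin N),
        (u i + w i) ^ 2 = ((u i) ^ 2 + (w i) ^ 2) + 2 * (u i * w i) := by intro i _; ring
    rw [Finset.sum_congr rfl e, Finset.sum_add_distrib, Finset.sum_add_distrib,
      ← Finset.mul_sum, h]
    ring
  -- residual decomposition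
  have decomp : ∀ (β₁ : Fin m → ℝ) (β₂ : Fin q → ℝ),
      (∑ i, (y i - X₁.mulVec β₁ i - X₂.mulVec β₂ i) ^ 2)
        = (∑ i, (Q.mulVec y i - (Q * X₁).mulVec β₁ i) ^ 2)
          + ∑ i, ((P.mulVec (y - X₁.mulVec β₁) - X₂.mulVec β₂) i) ^ 2 := by
    intro β₁ β₂
    set v : Fin N → ℝ := y - X₁.mulVec β₁ with hv
    have hsplit : ∀ i, y i - X₁.mulVec β₁ i - X₂.mulVec β₂ i
        = Q.mulVec v i + (P.mulVec v - X₂.mulVec β₂) i := by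
      intro i
      have h0 : Q.mulVec v + P.mulVec v = v := by
        rw [← Matrix.add_mulVec, hQ, sub_add_cancel, Matrix.one_mulVec]
      have h1 : (Q *ᵥ v) i + (P *ᵥ v) i = v i := congrFun h0 i
      have h2 : v i = y i - (X₁ *ᵥ β₁) i := by simp [hv]
      simp only [Pi.sub_apply]
      linarith
    have hQv : Q.mulVec y - (Q * X₁).mulVec β₁ = Q.mulVec v := by
      rw [hv, Matrix.mulVec_sub, ← Matrix.mulVec_mulVec]
    calc (∑ i, (y i - X₁.mulVec β₁ i - X₂.mulVec β₂ i) ^ 2)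
        = ∑ i, (Q.mulVec v i + (P.mulVec v - X₂.mulVec β₂) i) ^ 2 :=
          Finset.sum_congr rfl (fun i _ => by rw [hsplit i])
      _ = (∑ i, (Q.mulVec v i) ^ 2) + ∑ i, ((P.mulVec v - X₂.mulVec β₂) i) ^ 2 :=
          pyth _ _ (ortho v v β₂)
      _ = _ := by
          rw [← hQv]
          simp [Pi.sub_apply]
  -- characterization of the closed-form β₂
  have zerochar : ∀ (v : Fin N → ℝ) (b : Fin q → ℝ),
      (∑ i, ((P.mulVec v - X₂.mulVec b) i) ^ 2) = 0 ↔ b = (A⁻¹).mulVec (X₂ᵀ.mulVec v) := by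
    intro v b
    have hsum : (∑ i, ((P.mulVec v - X₂.mulVec b) i) ^ 2) = 0 ↔
        P.mulVec v = X₂.mulVec b := by
      rw [Finset.sum_eq_zero_iff_of_nonneg (fun i _ => sq_nonneg _)]
      constructor
      · intro h
        funext i
        have := h i (Finset.mem_univ i)
        have := pow_eq_zero_iff (n := 2) (by norm_num) |>.mp this
        simpa [sub_eq_zero] using this
      · intro h i _
        simp [h]
    rw [hsum]
    constructor
    · intro h
      have h2 : X₂ᵀ.mulVec (P.mulVec v) = X₂ᵀ.mulVec (X₂.mulVec b) := by rw [h]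
      rw [Matrix.mulVec_mulVec, Matrix.mulVec_mulVec, hX₂TP, ← hA] at h2
      have h3 : (A⁻¹).mulVec (X₂ᵀ.mulVec v) = b := by
        rw [h2, Matrix.mulVec_mulVec, hinvA, Matrix.one_mulVec]
      exact h3.symm
    · intro h
      rw [h, Matrix.mulVec_mulVec, Matrix.mulVec_mulVec]
  have nonneg : ∀ (v : Fin N → ℝ) (b : Fin q → ℝ),
      0 ≤ ∑ i, ((P.mulVec v - X₂.mulVec b) i) ^ 2 :=
    fun v b => Finset.sum_nonneg (fun i _ => sq_nonneg _)
  constructor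
  · intro h
    -- first establish bhat₂ formula
    set bstar : Fin q → ℝ := (A⁻¹).mulVec (X₂ᵀ.mulVec (y - X₁.mulVec bhat₁)) with hbstar
    have hT0 : (∑ i, ((P.mulVec (y - X₁.mulVec bhat₁) - X₂.mulVec bstar) i) ^ 2) = 0 :=
      (zerochar _ _).mpr rfl
    have hle := h bhat₁ bstar
    rw [decomp bhat₁ bhat₂, decomp bhat₁ bstar, hT0, add_zero] at hle
    have hT : (∑ i, ((P.mulVec (y - X₁.mulVec bhat₁) - X₂.mulVec bhat₂) i) ^ 2) = 0 := by
      have := nonneg (y - X₁.mulVec bhat₁) bhat₂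
      linarith
    have hb2 : bhat₂ = bstar := (zerochar _ _).mp hT
    refine ⟨?_, hb2⟩
    intro β₁
    have hle2 := h β₁ ((A⁻¹).mulVec (X₂ᵀ.mulVec (y - X₁.mulVec β₁)))
    rw [decomp bhat₁ bhat₂, decomp β₁ _, hT, add_zero,
      (zerochar (y - X₁.mulVec β₁) _).mpr rfl, add_zero] at hle2
    exact hle2
  · rintro ⟨hg, hb2⟩
    intro β₁ β₂
    have hT : (∑ i, ((P.mulVec (y - X₁.mulVec bhat₁) - X₂.mulVec bhat₂) i) ^ 2) = 0 :=
      (zerochar _ _).mpr hb2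
    rw [decomp bhat₁ bhat₂, decomp β₁ β₂, hT, add_zero]
    have := hg β₁
    have := nonneg (y - X₁.mulVec β₁) β₂
    linarith
end

section
/- Let X be a real N×p matrix, y ∈ ℝ^N, λ ≥ 0, and let D̃ be an invertible real p×p matrix whose first m rows form the matrix D (m×p) and whose remaining p−m rows form a matrix A. Write X·D̃⁻¹ = [X₁ X₂] where X₁ consists of the first m columns and X₂ of the remaining p−m columns, and assume X₂ᵀX₂ is invertible with P = X₂(X₂ᵀX₂)⁻¹X₂ᵀ. Then θ̂ ∈ ℝ^p is a global minimizer of ‖y − Xθ‖₂² + λ‖Dθ‖₁ if and only if, writing β̂ = D̃θ̂ with first block β̂₁ ∈ ℝ^m and second block β̂₂ ∈ ℝ^{p−m}, the vector β̂₁ is a global minimizer of ‖(I − P)y − (I − P)X₁β₁‖₂² + λ‖β₁‖₁ and β̂₂ = (X₂ᵀX₂)⁻¹X₂ᵀ(y − X₁β̂₁). -/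
open Matrix Finset

lemma aux_pyth {N : ℕ} (u v : Fin N → ℝ) (h : ∑ i, u i * v i = 0) :
    ∑ i, (u i + v i)^2 = (∑ i, (u i)^2) + ∑ i, (v i)^2 := by
  have hc : ∀ i ∈ Finset.univ (α := Fin N),
      (u i + v i)^2 = (u i)^2 + (v i)^2 + 2*(u i * v i) := by
    intro i _; ring
  rw [Finset.sum_congr rfl hc, Finset.sum_add_distrib, Finset.sum_add_distrib,
    ← Finset.mul_sum, h]
  ring

/-- Proposition 2: transforming the generalized LASSO `‖y − Xθ‖₂² + λ‖Dθ‖₁` into a regular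
LASSO via the change of variables `β = D̃θ`, where `D̃` is invertible with first `m` rows `D`,
`X D̃⁻¹ = [X₁ X₂]`, and `P = X₂(X₂ᵀX₂)⁻¹X₂ᵀ`.  Writing `βhat = D̃ θhat` with blocks
`βhat₁, βhat₂`:  `θhat` globally minimizes the generalized LASSO objective iff `βhat₁`
globally minimizes the regular LASSO `‖(I−P)y − (I−P)X₁β₁‖₂² + λ‖β₁‖₁` and
`βhat₂ = (X₂ᵀX₂)⁻¹X₂ᵀ(y − X₁ βhat₁)`. -/
theorem stmt_9 {N m r : ℕ} (X : Matrix (Fin N) (Fin m ⊕ Fin r) ℝ)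
    (Dtilde : Matrix (Fin m ⊕ Fin r) (Fin m ⊕ Fin r) ℝ) (hD : IsUnit Dtilde.det)
    (y : Fin N → ℝ) (lam : ℝ) (hlam : 0 ≤ lam)
    (X₁ : Matrix (Fin N) (Fin m) ℝ) (hX₁ : X₁ = (X * Dtilde⁻¹).submatrix id Sum.inl)
    (X₂ : Matrix (Fin N) (Fin r) ℝ) (hX₂ : X₂ = (X * Dtilde⁻¹).submatrix id Sum.inr)
    (hX₂inv : IsUnit (X₂ᵀ * X₂).det)
    (P : Matrix (Fin N) (Fin N) ℝ) (hP : P = X₂ * (X₂ᵀ * X₂)⁻¹ * X₂ᵀ)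
    (θhat : Fin m ⊕ Fin r → ℝ) :
    (∀ θ : Fin m ⊕ Fin r → ℝ,
        (∑ i, (y i - X.mulVec θhat i) ^ 2) + lam * ∑ j : Fin m, |Dtilde.mulVec θhat (Sum.inl j)|
          ≤ (∑ i, (y i - X.mulVec θ i) ^ 2) + lam * ∑ j : Fin m, |Dtilde.mulVec θ (Sum.inl j)|)
    ↔ ((∀ β₁ : Fin m → ℝ,
          (∑ i, (((1 : Matrix (Fin N) (Fin N) ℝ) - P).mulVec y i
              - (((1 : Matrix (Fin N) (Fin N) ℝ) - P) * X₁).mulVec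
                  (fun j => Dtilde.mulVec θhat (Sum.inl j)) i) ^ 2)
            + lam * ∑ j : Fin m, |Dtilde.mulVec θhat (Sum.inl j)|
          ≤ (∑ i, (((1 : Matrix (Fin N) (Fin N) ℝ) - P).mulVec y i
              - (((1 : Matrix (Fin N) (Fin N) ℝ) - P) * X₁).mulVec β₁ i) ^ 2)
            + lam * ∑ j : Fin m, |β₁ j|)
        ∧ (fun j => Dtilde.mulVec θhat (Sum.inr j))
            = (X₂ᵀ * X₂)⁻¹.mulVec
                (X₂ᵀ.mulVec (y - X₁.mulVec (fun j => Dtilde.mulVec θhat (Sum.inl j))))) := by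
  have hDinv : Dtilde⁻¹ * Dtilde = 1 := nonsing_inv_mul _ hD
  have hDinv' : Dtilde * Dtilde⁻¹ = 1 := mul_nonsing_inv _ hD
  -- the coordinate map c
  set c : (Fin m → ℝ) → Fin r → ℝ :=
    fun b1 => (X₂ᵀ * X₂)⁻¹.mulVec (X₂ᵀ.mulVec (y - X₁.mulVec b1)) with hc
  -- block decomposition of X.mulVec θ
  have hblock : ∀ θ : Fin m ⊕ Fin r → ℝ,
      X.mulVec θ = X₁.mulVec (fun j => Dtilde.mulVec θ (Sum.inl j))
        + X₂.mulVec (fun j => Dtilde.mulVec θ (Sum.inr j)) := by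
    intro θ
    have h1 : X.mulVec θ = (X * Dtilde⁻¹).mulVec (Dtilde.mulVec θ) := by
      rw [mulVec_mulVec, Matrix.mul_assoc, hDinv, Matrix.mul_one]
    rw [h1]
    funext i
    simp [Matrix.mulVec, dotProduct, Fintype.sum_sum_type, hX₁, hX₂]
  -- X₂ * c b1 = P (y - X₁ b1)
  have hXc : ∀ b1 : Fin m → ℝ,
      X₂.mulVec (c b1) = P.mulVec (y - X₁.mulVec b1) := by
    intro b1
    rw [hc, hP, mulVec_mulVec, mulVec_mulVec]
  -- X₂ᵀ * (1 - P) = 0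
  have hXP : X₂ᵀ * ((1 : Matrix (Fin N) (Fin N) ℝ) - P) = 0 := by
    rw [Matrix.mul_sub, Matrix.mul_one, hP, ← Matrix.mul_assoc, ← Matrix.mul_assoc,
      mul_nonsing_inv _ hX₂inv, Matrix.one_mul, sub_self]
  -- injectivity of X₂
  have hinj : ∀ u : Fin r → ℝ, X₂.mulVec u = 0 → u = 0 := by
    intro u hu
    have h1 : (X₂ᵀ * X₂).mulVec u = 0 := by
      rw [← mulVec_mulVec, hu, mulVec_zero]
    have h2 := congrArg (X₂ᵀ * X₂)⁻¹.mulVec h1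
    rwa [mulVec_mulVec, nonsing_inv_mul _ hX₂inv, one_mulVec, mulVec_zero] at h2
  -- key quadratic identity
  have key : ∀ (b1 : Fin m → ℝ) (b2 : Fin r → ℝ),
      ∑ i, (y i - (X₁.mulVec b1 + X₂.mulVec b2) i)^2
        = (∑ i, (((1 : Matrix (Fin N) (Fin N) ℝ) - P).mulVec y i
            - (((1 : Matrix (Fin N) (Fin N) ℝ) - P) * X₁).mulVec b1 i)^2)
          + ∑ i, (X₂.mulVec (c b1 - b2) i)^2 := by
    intro b1 b2
    have horth : ((1 - P).mulVec (y - X₁.mulVec b1)) ⬝ᵥ (X₂.mulVec (c b1 - b2)) = 0 := by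
      rw [Matrix.dotProduct_mulVec, ← Matrix.mulVec_transpose, mulVec_mulVec, hXP,
        zero_mulVec, zero_dotProduct]
    have hsum : ∀ i, y i - (X₁.mulVec b1 + X₂.mulVec b2) i
        = ((1 - P).mulVec (y - X₁.mulVec b1)) i + (X₂.mulVec (c b1 - b2)) i := by
      intro i
      have e2 : X₂.mulVec (c b1 - b2) = P.mulVec (y - X₁.mulVec b1) - X₂.mulVec b2 := by
        rw [Matrix.mulVec_sub, hXc]
      have e1 : (1 - P).mulVec (y - X₁.mulVec b1)
          = (y - X₁.mulVec b1) - P.mulVec (y - X₁.mulVec b1) := by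
        rw [Matrix.sub_mulVec, Matrix.one_mulVec]
      rw [e1, e2]
      simp
      ring
    have hfirst : ∀ i, ((1 : Matrix (Fin N) (Fin N) ℝ) - P).mulVec y i
        - (((1 : Matrix (Fin N) (Fin N) ℝ) - P) * X₁).mulVec b1 i
        = ((1 - P).mulVec (y - X₁.mulVec b1)) i := by
      intro i
      rw [Matrix.mulVec_sub, ← mulVec_mulVec]
      simp
    calc ∑ i, (y i - (X₁.mulVec b1 + X₂.mulVec b2) i)^2
        = ∑ i, (((1 - P).mulVec (y - X₁.mulVec b1)) i + (X₂.mulVec (c b1 - b2)) i)^2 := by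
          exact Finset.sum_congr rfl fun i _ => by rw [hsum i]
      _ = (∑ i, (((1 - P).mulVec (y - X₁.mulVec b1)) i)^2)
            + ∑ i, ((X₂.mulVec (c b1 - b2)) i)^2 := by
          exact aux_pyth _ _ (by simpa [dotProduct] using horth)
      _ = _ := by
          refine congrArg₂ (· + ·) (Finset.sum_congr rfl fun i _ => ?_) rfl
          rw [hfirst i]
  -- q nonneg and zero characterization
  have qnn : ∀ b1 b2, (0:ℝ) ≤ ∑ i, (X₂.mulVec (c b1 - b2) i)^2 :=
    fun b1 b2 => Finset.sum_nonneg fun i _ => sq_nonneg _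
  have qzero : ∀ b1 b2, (∑ i, (X₂.mulVec (c b1 - b2) i)^2) = 0 ↔ b2 = c b1 := by
    intro b1 b2
    constructor
    · intro h
      have h1 : ∀ i ∈ Finset.univ (α := Fin N), (X₂.mulVec (c b1 - b2) i)^2 = 0 :=
        (Finset.sum_eq_zero_iff_of_nonneg (fun i _ => sq_nonneg _)).mp h
      have h2 : X₂.mulVec (c b1 - b2) = 0 := by
        funext i
        exact pow_eq_zero_iff (n := 2) (by norm_num) |>.mp (h1 i (Finset.mem_univ i))
      have := hinj _ h2
      have h3 : c b1 - b2 = 0 := this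
      funext j
      have := congrFun h3 j
      simp [Pi.sub_apply, sub_eq_zero] at this
      exact this.symm
    · intro h
      rw [h, sub_self, mulVec_zero]
      simp
  -- objective in terms of g and q
  set g : (Fin m → ℝ) → ℝ := fun b1 =>
    (∑ i, (((1 : Matrix (Fin N) (Fin N) ℝ) - P).mulVec y i
        - (((1 : Matrix (Fin N) (Fin N) ℝ) - P) * X₁).mulVec b1 i)^2)
      + lam * ∑ j : Fin m, |b1 j| with hg
  set q : (Fin m → ℝ) → (Fin r → ℝ) → ℝ :=
    fun b1 b2 => ∑ i, (X₂.mulVec (c b1 - b2) i)^2 with hq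
  have obj : ∀ θ : Fin m ⊕ Fin r → ℝ,
      (∑ i, (y i - X.mulVec θ i)^2) + lam * ∑ j : Fin m, |Dtilde.mulVec θ (Sum.inl j)|
        = g (fun j => Dtilde.mulVec θ (Sum.inl j))
          + q (fun j => Dtilde.mulVec θ (Sum.inl j)) (fun j => Dtilde.mulVec θ (Sum.inr j)) := by
    intro θ
    rw [hblock θ]
    rw [key (fun j => Dtilde.mulVec θ (Sum.inl j)) (fun j => Dtilde.mulVec θ (Sum.inr j))]
    simp [hg, hq]
    ring
  set bh1 : Fin m → ℝ := fun j => Dtilde.mulVec θhat (Sum.inl j) with hbh1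
  set bh2 : Fin r → ℝ := fun j => Dtilde.mulVec θhat (Sum.inr j) with hbh2
  -- surjectivity: every pair (b1,b2) is realized
  have hsurj : ∀ (b1 : Fin m → ℝ) (b2 : Fin r → ℝ), ∃ θ : Fin m ⊕ Fin r → ℝ,
      (fun j => Dtilde.mulVec θ (Sum.inl j)) = b1
        ∧ (fun j => Dtilde.mulVec θ (Sum.inr j)) = b2 := by
    intro b1 b2
    refine ⟨Dtilde⁻¹.mulVec (Sum.elim b1 b2), ?_, ?_⟩ <;>
    · funext j
      rw [mulVec_mulVec, hDinv', one_mulVec]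
      rfl
  constructor
  · intro H
    have H' : ∀ (b1 : Fin m → ℝ) (b2 : Fin r → ℝ),
        g bh1 + q bh1 bh2 ≤ g b1 + q b1 b2 := by
      intro b1 b2
      obtain ⟨θ, h1, h2⟩ := hsurj b1 b2
      have := H θ
      rw [obj θhat, obj θ, h1, h2] at this
      exact this
    have hq0 : q bh1 bh2 = 0 := by
      have h1 := H' bh1 (c bh1)
      have h2 : q bh1 (c bh1) = 0 := (qzero bh1 (c bh1)).mpr rfl
      rw [h2, add_zero] at h1
      have := le_antisymm (by linarith) (qnn bh1 bh2)
      exact this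
    have hb2 : bh2 = c bh1 := (qzero bh1 bh2).mp hq0
    refine ⟨fun b1 => ?_, hb2⟩
    have h1 := H' b1 (c b1)
    have h2 : q b1 (c b1) = 0 := (qzero b1 (c b1)).mpr rfl
    rw [hq0, h2, add_zero, add_zero] at h1
    simpa [hg] using h1
  · rintro ⟨H1, H2⟩
    intro θ
    rw [obj θhat, obj θ]
    have hq0 : q bh1 bh2 = 0 := (qzero bh1 bh2).mpr H2
    rw [hq0, add_zero]
    have h1 : g bh1 ≤ g (fun j => Dtilde.mulVec θ (Sum.inl j)) := by
      simpa [hg] using H1 (fun j => Dtilde.mulVec θ (Sum.inl j))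
    have h2 := qnn (fun j => Dtilde.mulVec θ (Sum.inl j)) (fun j => Dtilde.mulVec θ (Sum.inr j))
    calc g bh1 ≤ g (fun j => Dtilde.mulVec θ (Sum.inl j)) := h1
      _ ≤ _ := le_add_of_nonneg_right h2
end
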